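/- arXiv:2104.11322 — 3 statements merged into one kernel-verified Lean document; each statement's English description precedes it below -/
import Mathlib

section
/- Let μ > 0, L_c > 0, μ_c > 0, a₁ > 0, a₃ > 0 and set f₁ = √(6μ_c/((a₁+2a₃)μ)). Define I₁(x) = ∫₀^π e^{x cos τ} cos τ dτ. Then for every constant A ∈ ℝ, the function g_p : (0,∞) → ℝ, g_p(r) = 1 + A·I₁(f₁·r/L_c)/r, is twice differentiable and solves the Cosserat torsion equilibrium equation 6rμ_c(g_p(r) − 1) − μL_c²(a₁+2a₃)(3g_p′(r) + r·g_p″(r)) = 0 for every r > 0. -/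
open Real intervalIntegral

noncomputable section

/-!
Differentiating under the integral sign, `I₁' = ∫₀^π e^{x cos τ} cos² τ dτ` and
`I₁'' = ∫₀^π e^{x cos τ} cos³ τ dτ`, and `I₁` satisfies Bessel's equation of order one. For any
solution `F` of that equation, `h(s) = F(c s) / s` solves `s h'' + 3 h' = c² s h`. With
`c = f₁ / L_c` one has `c² L_c² (a₁ + 2 a₃) μ = 6 μ_c`, so `g_p = 1 + A h` solves the
equilibrium equation.
-/

/-- The modified Bessel function of the first kind of order one, up to normalization:
I₁(x) = ∫₀^π e^{x cos τ} cos τ dτ. -/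
def besselI1 (x : ℝ) : ℝ := ∫ τ in (0:ℝ)..π, Real.exp (x * Real.cos τ) * Real.cos τ

open MeasureTheory Filter Topology

def expCosMoment (n : ℕ) (x : ℝ) : ℝ := ∫ τ in (0:ℝ)..π, exp (x * cos τ) * cos τ ^ n

lemma besselI1_eq_expCosMoment_one : besselI1 = expCosMoment 1 := by
  funext x
  simp only [besselI1, expCosMoment, pow_one]

lemma norm_exp_mul_cos_mul_cos_pow_le (n : ℕ) (y τ : ℝ) :
    ‖exp (y * cos τ) * cos τ ^ n‖ ≤ exp |y| := by
  have hcos : |cos τ| ≤ 1 := abs_cos_le_one τ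
  have hexp : exp (y * cos τ) ≤ exp |y| :=
    exp_le_exp.2 <| calc
      y * cos τ ≤ |y| * |cos τ| := by rw [← abs_mul]; exact le_abs_self _
      _ ≤ |y| := mul_le_of_le_one_right (abs_nonneg y) hcos
  rw [norm_mul, norm_pow, norm_of_nonneg (exp_pos _).le, Real.norm_eq_abs]
  calc exp (y * cos τ) * |cos τ| ^ n ≤ exp |y| * 1 := by
        gcongr
        exact pow_le_one₀ (abs_nonneg _) hcos
    _ = exp |y| := mul_one _

lemma hasDerivAt_expCosMoment (n : ℕ) (x : ℝ) :
    HasDerivAt (expCosMoment n) (expCosMoment (n + 1) x) x := by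
  have hcont : ∀ m y, Continuous fun τ => exp (y * cos τ) * cos τ ^ m := fun _ _ => by fun_prop
  refine (hasDerivAt_integral_of_dominated_loc_of_deriv_le (μ := volume)
    (F' := fun y τ => exp (y * cos τ) * cos τ ^ (n + 1)) (bound := fun _ => exp (|x| + 1))
    (Metric.ball_mem_nhds x one_pos)
    (Eventually.of_forall fun y => (hcont n y).aestronglyMeasurable)
    ((hcont n x).intervalIntegrable 0 π) (hcont (n + 1) x).aestronglyMeasurable
    ?_ intervalIntegrable_const ?_).2
  · refine Eventually.of_forall fun τ _ y hy => (norm_exp_mul_cos_mul_cos_pow_le _ y τ).trans ?_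
    have : |y - x| < 1 := by rwa [Metric.mem_ball, Real.dist_eq] at hy
    exact exp_le_exp.2 (by linarith [abs_sub_abs_le_abs_sub y x])
  · exact Eventually.of_forall fun τ _ y _ =>
      ((hasDerivAt_mul_const (cos τ)).exp.mul_const (cos τ ^ n)).congr_deriv (by ring)

/-- The integrand is the `τ`-derivative of `e^{x cos τ} sin τ (x cos τ - 1)`, which vanishes at
`0` and `π`. -/
lemma expCosMoment_bessel (x : ℝ) :
    x ^ 2 * expCosMoment 3 x + x * expCosMoment 2 x - (x ^ 2 + 1) * expCosMoment 1 x = 0 := by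
  have hint : ∀ n : ℕ, IntervalIntegrable (fun τ => exp (x * cos τ) * cos τ ^ n) volume 0 π :=
    fun n => (by fun_prop : Continuous _).intervalIntegrable 0 π
  have hderiv : ∀ τ ∈ Set.uIcc 0 π,
      HasDerivAt (fun τ => exp (x * cos τ) * (sin τ * (x * cos τ - 1)))
      (x ^ 2 * (exp (x * cos τ) * cos τ ^ 3) + x * (exp (x * cos τ) * cos τ ^ 2)
        - (x ^ 2 + 1) * (exp (x * cos τ) * cos τ ^ 1)) τ := by
    intro τ _
    refine (((hasDerivAt_cos τ).const_mul x).exp.mul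
      ((hasDerivAt_sin τ).mul (((hasDerivAt_cos τ).const_mul x).sub_const 1))).congr_deriv ?_
    simp only [Pi.mul_apply]
    linear_combination (-(x ^ 2 * cos τ * exp (x * cos τ))) * Real.sin_sq τ
  have hFTC := integral_eq_sub_of_hasDerivAt hderiv
    ((((hint 3).const_mul _).add ((hint 2).const_mul _)).sub ((hint 1).const_mul _))
  rw [integral_sub (((hint 3).const_mul _).add ((hint 2).const_mul _)) ((hint 1).const_mul _),
    integral_add ((hint 3).const_mul _) ((hint 2).const_mul _), intervalIntegral.integral_const_mul,
    intervalIntegral.integral_const_mul, intervalIntegral.integral_const_mul] at hFTC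
  simpa [expCosMoment] using hFTC

section RadialBessel

variable {F F' F'' : ℝ → ℝ}

lemma hasDerivAt_comp_mul_div_pow (hF : ∀ x, HasDerivAt F (F' x) x) (c : ℝ) (n : ℕ) {s : ℝ}
    (hs : s ≠ 0) :
    HasDerivAt (fun s => F (c * s) / s ^ n) (c * F' (c * s) / s ^ n - n * F (c * s) / s ^ (n + 1))
      s := by
  refine (((hF (c * s)).comp s ((hasDerivAt_id s).const_mul c)).div (hasDerivAt_pow n s)
    (pow_ne_zero n hs)).congr_deriv ?_
  simp only [Function.comp_apply, mul_one]
  cases n with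
  | zero => simp [mul_comm]
  | succ n =>
    rw [Nat.add_sub_cancel]
    field_simp
    push_cast
    ring

lemma deriv_comp_mul_div_eventuallyEq (hF : ∀ x, HasDerivAt F (F' x) x) (c : ℝ) {s : ℝ}
    (hs : s ≠ 0) :
    deriv (fun s => F (c * s) / s) =ᶠ[𝓝 s] fun s => c * F' (c * s) / s - F (c * s) / s ^ 2 := by
  filter_upwards [isOpen_ne.mem_nhds hs] with t ht
  simpa using (hasDerivAt_comp_mul_div_pow hF c 1 ht).deriv

lemma hasDerivAt_deriv_comp_mul_div (hF : ∀ x, HasDerivAt F (F' x) x)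
    (hF' : ∀ x, HasDerivAt F' (F'' x) x) (c : ℝ) {s : ℝ} (hs : s ≠ 0) :
    HasDerivAt (deriv fun s => F (c * s) / s)
      (c * (c * F'' (c * s) / s - F' (c * s) / s ^ 2)
        - (c * F' (c * s) / s ^ 2 - 2 * F (c * s) / s ^ 3)) s := by
  have h := ((hasDerivAt_comp_mul_div_pow hF' c 1 hs).const_mul c).sub
    (hasDerivAt_comp_mul_div_pow hF c 2 hs)
  refine (h.congr_deriv ?_).congr_of_eventuallyEq <|
    (deriv_comp_mul_div_eventuallyEq hF c hs).trans
      (.of_forall fun t => by simp only [Pi.sub_apply, pow_one, mul_div_assoc])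
  push_cast
  ring

lemma comp_mul_div_radial_equation (hF : ∀ x, HasDerivAt F (F' x) x)
    (hF' : ∀ x, HasDerivAt F' (F'' x) x)
    (hBessel : ∀ x, x ^ 2 * F'' x + x * F' x - (x ^ 2 + 1) * F x = 0) (c : ℝ) {s : ℝ}
    (hs : s ≠ 0) :
    3 * deriv (fun s => F (c * s) / s) s + s * deriv (deriv fun s => F (c * s) / s) s
      = c ^ 2 * F (c * s) := by
  rw [(deriv_comp_mul_div_eventuallyEq hF c hs).eq_of_nhds,
    (hasDerivAt_deriv_comp_mul_div hF hF' c hs).deriv]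
  field_simp
  linear_combination hBessel (c * s)

end RadialBessel

/-- g_p(r) = 1 + A·I₁(f₁r/L_c)/r is twice differentiable on (0,∞) and solves the
Cosserat torsion equilibrium equation. -/
theorem cosserat_torsion_solution
    (μ Lc μc a₁ a₃ : ℝ) (hμ : 0 < μ) (hLc : 0 < Lc) (hμc : 0 < μc)
    (ha₁ : 0 < a₁) (ha₃ : 0 < a₃) (A : ℝ) :
    ∀ r : ℝ, 0 < r →
      DifferentiableAt ℝ
        (fun s => 1 + A * besselI1 (Real.sqrt (6 * μc / ((a₁ + 2 * a₃) * μ)) * s / Lc) / s) r ∧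
      DifferentiableAt ℝ
        (deriv (fun s =>
          1 + A * besselI1 (Real.sqrt (6 * μc / ((a₁ + 2 * a₃) * μ)) * s / Lc) / s)) r ∧
      6 * r * μc *
          ((fun s =>
            1 + A * besselI1 (Real.sqrt (6 * μc / ((a₁ + 2 * a₃) * μ)) * s / Lc) / s) r - 1)
        - μ * Lc ^ 2 * (a₁ + 2 * a₃) *
          (3 * deriv (fun s =>
              1 + A * besselI1 (Real.sqrt (6 * μc / ((a₁ + 2 * a₃) * μ)) * s / Lc) / s) r
            + r * deriv (deriv (fun s =>
              1 + A * besselI1 (Real.sqrt (6 * μc / ((a₁ + 2 * a₃) * μ)) * s / Lc) / s)) r)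
        = 0 := by
  intro r hr
  set k := Real.sqrt (6 * μc / ((a₁ + 2 * a₃) * μ))
  have hk : k ^ 2 * ((a₁ + 2 * a₃) * μ) = 6 * μc := by
    rw [Real.sq_sqrt (by positivity), div_mul_cancel₀ _ (by positivity)]
  have hg : (fun s => 1 + A * besselI1 (k * s / Lc) / s)
      = fun s => 1 + A * (expCosMoment 1 (k / Lc * s) / s) := by
    funext s
    rw [besselI1_eq_expCosMoment_one, mul_div_right_comm k, mul_div_assoc]
  have hM₁ : ∀ x, HasDerivAt (expCosMoment 1) (expCosMoment 2 x) x := hasDerivAt_expCosMoment 1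
  have hM₂ : ∀ x, HasDerivAt (expCosMoment 2) (expCosMoment 3 x) x := hasDerivAt_expCosMoment 2
  have hr₀ := hr.ne'
  have hd : DifferentiableAt ℝ (fun s => expCosMoment 1 (k / Lc * s) / s) r := by
    simpa using (hasDerivAt_comp_mul_div_pow hM₁ (k / Lc) 1 hr₀).differentiableAt
  have hrad := comp_mul_div_radial_equation hM₁ hM₂ expCosMoment_bessel (k / Lc) hr₀
  simp only [hg, deriv_const_add', deriv_const_mul_field']
  refine ⟨(hd.const_mul A).const_add 1,
    (hasDerivAt_deriv_comp_mul_div hM₁ hM₂ _ hr₀).differentiableAt.const_mul A, ?_⟩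
  rw [besselI1_eq_expCosMoment_one, mul_div_right_comm k r Lc, mul_left_comm (3 : ℝ) A,
    mul_left_comm r A, ← mul_add, hrad]
  generalize expCosMoment 1 (k / Lc * r) = M
  field_simp
  linear_combination -(A * M) * hk
end
end

section
/- (Nye's formula) Let φ : ℝ³ → ℝ³ be differentiable at x ∈ ℝ³ and let Anti(φ) be the skew-symmetric matrix field Anti(φ(y)) = [[0, −φ₃(y), φ₂(y)], [φ₃(y), 0, −φ₁(y)], [−φ₂(y), φ₁(y), 0]]. Then the row-wise Curl of the matrix field Anti(φ) satisfies Curl(Anti φ)(x) = tr(Dφ(x))·𝟙 − (Dφ(x))ᵀ, where Dφ(x) is the Jacobian matrix (∂φᵢ/∂xⱼ). -/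
/-! Every entry of `Anti φ` is `0` or `±φₖ`, and `fderiv` commutes with negation, so each entry
of `Curl (Anti φ)` is a signed sum of entries of `Dφ`; comparing these with `tr (Dφ) 𝟙 - (Dφ)ᵀ`
is linear algebra. -/

open Matrix MeasureTheory Real Filter Asymptotics

noncomputable section

abbrev Mat3 := Matrix (Fin 3) (Fin 3) ℝ

/-- Partial derivative of a scalar field in the `j`-th coordinate direction. -/
def pd (j : Fin 3) (f : (Fin 3 → ℝ) → ℝ) (x : Fin 3 → ℝ) : ℝ :=
  fderiv ℝ f x (Pi.single j 1)

/-- Jacobian matrix (Du)ᵢⱼ = ∂uᵢ/∂xⱼ of a vector field. -/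
def jac (u : (Fin 3 → ℝ) → Fin 3 → ℝ) (x : Fin 3 → ℝ) : Mat3 :=
  Matrix.of fun i j => pd j (fun y => u y i) x

/-- Symmetric part of a matrix. -/
def symm3 (P : Mat3) : Mat3 := (1/2 : ℝ) • (P + Pᵀ)

/-- Skew-symmetric part of a matrix. -/
def skew3 (P : Mat3) : Mat3 := (1/2 : ℝ) • (P - Pᵀ)

/-- Deviatoric part of a matrix. -/
def dev3 (P : Mat3) : Mat3 := P - (Matrix.trace P / 3) • (1 : Mat3)

/-- Squared Frobenius norm. -/
def frob2 (P : Mat3) : ℝ := ∑ i, ∑ j, (P i j)^2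

/-- Frobenius inner product. -/
def frobInner (P Q : Mat3) : ℝ := ∑ i, ∑ j, P i j * Q i j

/-- Row-wise divergence of a matrix field. -/
def matDiv (σ : (Fin 3 → ℝ) → Mat3) (x : Fin 3 → ℝ) : Fin 3 → ℝ :=
  fun i => ∑ j, pd j (fun y => σ y i j) x

/-- Curl of a vector field. -/
def curl3 (v : (Fin 3 → ℝ) → Fin 3 → ℝ) (x : Fin 3 → ℝ) : Fin 3 → ℝ :=
  ![pd 1 (fun y => v y 2) x - pd 2 (fun y => v y 1) x,
    pd 2 (fun y => v y 0) x - pd 0 (fun y => v y 2) x,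
    pd 0 (fun y => v y 1) x - pd 1 (fun y => v y 0) x]

/-- Row-wise Curl of a matrix field. -/
def matCurl (P : (Fin 3 → ℝ) → Mat3) (x : Fin 3 → ℝ) : Mat3 :=
  Matrix.of fun i => curl3 (fun y => P y i) x

/-- The torsion displacement field u(x) = ϑ·(−x₂x₃, x₁x₃, 0). -/
def torsionU (ϑ : ℝ) (x : Fin 3 → ℝ) : Fin 3 → ℝ :=
  ![-(ϑ * x 1 * x 2), ϑ * x 0 * x 2, 0]

/-- The skew-symmetric matrix associated with a vector: Anti(v)·b = v × b. -/
def anti3 (v : Fin 3 → ℝ) : Mat3 :=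
  Matrix.of ![![0, -v 2, v 1], ![v 2, 0, -v 0], ![-v 1, v 0, 0]]

lemma pd_neg (j : Fin 3) (f : (Fin 3 → ℝ) → ℝ) (x : Fin 3 → ℝ) :
    pd j (fun y => -f y) x = -pd j f x := by
  simp [pd]

lemma pd_const (j : Fin 3) (c : ℝ) (x : Fin 3 → ℝ) : pd j (fun _ => c) x = 0 := by
  simp [pd]

lemma matCurl_anti3 (φ : (Fin 3 → ℝ) → Fin 3 → ℝ) (x : Fin 3 → ℝ) :
    matCurl (fun y => anti3 (φ y)) x =
      !![jac φ x 1 1 + jac φ x 2 2, -jac φ x 1 0, -jac φ x 2 0;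
        -jac φ x 0 1, jac φ x 0 0 + jac φ x 2 2, -jac φ x 2 1;
        -jac φ x 0 2, -jac φ x 1 2, jac φ x 0 0 + jac φ x 1 1] := by
  ext i j
  fin_cases i <;> fin_cases j <;>
    simp [matCurl, curl3, anti3, jac, pd_neg, pd_const, add_comm]

lemma trace_smul_one_sub_transpose (J : Mat3) :
    J.trace • (1 : Mat3) - Jᵀ =
      !![J 1 1 + J 2 2, -J 1 0, -J 2 0;
        -J 0 1, J 0 0 + J 2 2, -J 2 1;
        -J 0 2, -J 1 2, J 0 0 + J 1 1] := by
  ext i j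
  fin_cases i <;> fin_cases j <;>
    simp [Matrix.trace, Fin.sum_univ_three] <;> ring

theorem nye_formula_general (φ : (Fin 3 → ℝ) → Fin 3 → ℝ) (x : Fin 3 → ℝ) :
    matCurl (fun y => anti3 (φ y)) x
      = Matrix.trace (jac φ x) • (1 : Mat3) - (jac φ x)ᵀ := by
  rw [matCurl_anti3, trace_smul_one_sub_transpose]

/-- Nye's formula: Curl(Anti φ) = tr(Dφ)·𝟙 − (Dφ)ᵀ at a point of
differentiability. -/
theorem nye_formula (φ : (Fin 3 → ℝ) → Fin 3 → ℝ) (x : Fin 3 → ℝ)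
    (hφ : DifferentiableAt ℝ φ x) :
    matCurl (fun y => anti3 (φ y)) x
      = Matrix.trace (jac φ x) • (1 : Mat3) - (jac φ x)ᵀ :=
  nye_formula_general φ x
end
end

section
/- (Correspondence of Cosserat curvature energies) Let a₁, a₂, a₃ ∈ ℝ. For every 3×3 real matrix B, setting K = tr(B)·𝟙 − Bᵀ (the Nye transform of B), one has a₁·‖dev sym K‖² + a₂·‖skew K‖² + (a₃/3)·tr²(K) = ((4a₃ − a₁)/3)·tr²(B) + ((a₁ − a₂)/2)·⟨Bᵀ, B⟩ + ((a₁ + a₂)/2)·‖B‖², where ⟨·,·⟩ is the Frobenius inner product and ‖·‖ the Frobenius norm. (With B = Dφ, φ = axl A, this converts the dislocation-format curvature energy in Curl A into the classical format in Dφ with α = (μL_c²/2)(4a₃−a₁)/3, β = (μL_c²/2)(a₁−a₂)/2, γ = (μL_c²/2)(a₁+a₂)/2.) -/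
/-!
Write K = tr B · 𝟙 − Bᵀ. Since skew(−Bᵀ) = skew B, sym(−Bᵀ) = −sym B and dev annihilates the
spherical part tr B · 𝟙, we get ‖skew K‖ = ‖skew B‖, ‖dev sym K‖ = ‖dev sym B‖ and tr K = 2 tr B.
The identity then follows from ‖dev P‖² = ‖P‖² − tr²P/3 and ‖sym B‖², ‖skew B‖² = (‖B‖² ± ⟨Bᵀ, B⟩)/2.
-/

open Matrix

noncomputable section

theorem trace_smul_one_sub (t : ℝ) (P : Mat3) : trace (t • (1 : Mat3) - P) = 3 * t - trace P := by
  simp only [trace_sub, trace_smul, trace_one, Fintype.card_fin, smul_eq_mul]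
  norm_num
  ring

theorem symm3_smul_one_sub_transpose (t : ℝ) (B : Mat3) :
    symm3 (t • (1 : Mat3) - Bᵀ) = t • (1 : Mat3) - symm3 B := by
  simp only [symm3, transpose_sub, transpose_smul, transpose_one, transpose_transpose]
  module

theorem skew3_smul_one_sub_transpose (t : ℝ) (B : Mat3) :
    skew3 (t • (1 : Mat3) - Bᵀ) = skew3 B := by
  simp only [skew3, transpose_sub, transpose_smul, transpose_one, transpose_transpose]
  module

theorem dev3_smul_one_sub (t : ℝ) (P : Mat3) : dev3 (t • (1 : Mat3) - P) = -dev3 P := by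
  simp only [dev3, trace_sub, trace_smul, trace_one, Fintype.card_fin, smul_eq_mul]
  module

theorem trace_symm3 (B : Mat3) : trace (symm3 B) = trace B := by
  simp only [symm3, trace_smul, trace_add, trace_transpose, smul_eq_mul]
  ring

theorem frob2_neg (P : Mat3) : frob2 (-P) = frob2 P := by
  simp [frob2]

theorem frob2_dev3 (P : Mat3) : frob2 (dev3 P) = frob2 P - trace P ^ 2 / 3 := by
  simp only [frob2, dev3, trace, diag, Fin.sum_univ_three, Matrix.sub_apply, Matrix.smul_apply,
    one_apply, smul_eq_mul]
  norm_num [Fin.ext_iff]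
  ring

theorem frob2_symm3 (B : Mat3) : frob2 (symm3 B) = (frob2 B + frobInner Bᵀ B) / 2 := by
  simp only [frob2, frobInner, symm3, Fin.sum_univ_three, Matrix.smul_apply, Matrix.add_apply,
    transpose_apply, smul_eq_mul]
  ring

theorem frob2_skew3 (B : Mat3) : frob2 (skew3 B) = (frob2 B - frobInner Bᵀ B) / 2 := by
  simp only [frob2, frobInner, skew3, Fin.sum_univ_three, Matrix.smul_apply, Matrix.sub_apply,
    transpose_apply, smul_eq_mul]
  ring

/-- correspondence of Cosserat curvature energies under the Nye transform
K = tr(B)·𝟙 − Bᵀ. -/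
theorem cosserat_curvature_correspondence (a₁ a₂ a₃ : ℝ) (B : Mat3) :
    a₁ * frob2 (dev3 (symm3 (Matrix.trace B • (1 : Mat3) - Bᵀ)))
      + a₂ * frob2 (skew3 (Matrix.trace B • (1 : Mat3) - Bᵀ))
      + a₃ / 3 * (Matrix.trace (Matrix.trace B • (1 : Mat3) - Bᵀ)) ^ 2
    = (4 * a₃ - a₁) / 3 * (Matrix.trace B) ^ 2
      + (a₁ - a₂) / 2 * frobInner Bᵀ B
      + (a₁ + a₂) / 2 * frob2 B := by
  rw [symm3_smul_one_sub_transpose, dev3_smul_one_sub, frob2_neg, frob2_dev3, frob2_symm3,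
    trace_symm3, skew3_smul_one_sub_transpose, frob2_skew3, trace_smul_one_sub, trace_transpose]
  ring
end
end
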